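/- Let W be a real random variable with 0 < E W² < ∞, let W^(2) have the 2-power bias distribution of W, and let V be uniform on (−1,1) and independent of W^(2). Then for every absolutely continuous function f : ℝ → ℝ with bounded derivative, 2·E W² · E f′(V·W^(2)) = E[W f(W)] − E[W f(−W)]. -/

import Mathlib

open MeasureTheory ProbabilityTheory

/-- The `α`-power bias distribution of a distribution `μ` on `ℝ`: the probability measure
with density `|x|^α / ∫ |x|^α dμ` with respect to `μ`. -/
noncomputable def powerBias (α : ℝ) (μ : Measure ℝ) : Measure ℝ :=
  (ENNReal.ofReal (∫ x, |x| ^ α ∂μ))⁻¹ •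
    μ.withDensity (fun x => ENNReal.ofReal (|x| ^ α))

/-- The uniform probability measure on the open interval `(a, b)`. -/
noncomputable def uniformIoo (a b : ℝ) : Measure ℝ :=
  (ENNReal.ofReal (b - a))⁻¹ • volume.restrict (Set.Ioo a b)

/-- `f` is absolutely continuous with (a.e.) derivative `f'`, and `f'` is bounded. -/
def IsAbsContWithBddDeriv (f f' : ℝ → ℝ) : Prop :=
  Measurable f' ∧ (∃ C, ∀ x, |f' x| ≤ C) ∧ ∀ x, f x = f 0 + ∫ t in (0:ℝ)..x, f' t

/-!
Conditionally on `W⁽²⁾ = x`, the substitution `t = v x` turns `E f'(V x)` into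
`(f x - f (-x)) / (2 x)`, so `x² E f'(V x) = x (f x - f (-x)) / 2` for every `x`, including
`x = 0`. The `2`-power bias law has density `x² / E W²` with respect to the law of `W`, so
integrating this identity against it gives the claim. Both terms on the right are integrable
because `f` is Lipschitz, so `W`, `f (W)` and `f (-W)` all lie in `L²`.
-/

theorem integral_uniformIoo {E : Type*} [NormedAddCommGroup E] [NormedSpace ℝ E] {a b : ℝ}
    (hab : a ≤ b) (g : ℝ → E) :
    ∫ v, g v ∂uniformIoo a b = (b - a)⁻¹ • ∫ v in a..b, g v := by
  rw [uniformIoo, integral_smul_measure, ENNReal.toReal_inv,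
    ENNReal.toReal_ofReal (sub_nonneg.2 hab), intervalIntegral.integral_of_le hab,
    integral_Ioc_eq_integral_Ioo]

theorem integral_powerBias {E : Type*} [NormedAddCommGroup E] [NormedSpace ℝ E] (α : ℝ)
    (μ : Measure ℝ) (g : ℝ → E) :
    ∫ x, g x ∂powerBias α μ = (∫ x, |x| ^ α ∂μ)⁻¹ • ∫ x, |x| ^ α • g x ∂μ := by
  rw [powerBias, integral_smul_measure, integral_withDensity_eq_integral_toReal_smul
    (by fun_prop) (.of_forall fun _ => ENNReal.ofReal_lt_top), ENNReal.toReal_inv,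
    ENNReal.toReal_ofReal (integral_nonneg fun x => by positivity)]
  simp only [ENNReal.toReal_ofReal (Real.rpow_nonneg (abs_nonneg _) _)]

namespace IsAbsContWithBddDeriv

variable {f f' : ℝ → ℝ}

theorem intervalIntegrable (hf : IsAbsContWithBddDeriv f f') (a b : ℝ) :
    IntervalIntegrable f' volume a b := by
  obtain ⟨hf'm, ⟨C, hC⟩, -⟩ := hf
  exact (intervalIntegrable_const (c := C)).mono_fun' hf'm.aestronglyMeasurable.restrict
    (.of_forall hC)

theorem integral_eq_sub (hf : IsAbsContWithBddDeriv f f') (a b : ℝ) :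
    ∫ t in a..b, f' t = f b - f a := by
  rw [hf.2.2 a, hf.2.2 b, ← intervalIntegral.integral_add_adjacent_intervals
    (hf.intervalIntegrable 0 a) (hf.intervalIntegrable a b)]
  ring

theorem exists_lipschitzWith (hf : IsAbsContWithBddDeriv f f') : ∃ K, LipschitzWith K f := by
  obtain ⟨C, hC⟩ := hf.2.1
  refine ⟨C.toNNReal, .of_dist_le_mul fun x y => ?_⟩
  rw [Real.dist_eq, Real.dist_eq, ← hf.integral_eq_sub, Real.coe_toNNReal']
  exact intervalIntegral.norm_integral_le_of_norm_le_const (f := f') (a := y) (b := x)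
    (C := max C 0) fun t _ => (hC t).trans (le_max_left _ _)

theorem continuous (hf : IsAbsContWithBddDeriv f f') : Continuous f :=
  hf.exists_lipschitzWith.choose_spec.continuous

theorem comp_neg (hf : IsAbsContWithBddDeriv f f') :
    IsAbsContWithBddDeriv (fun x => f (-x)) (fun x => -f' (-x)) := by
  obtain ⟨C, hC⟩ := hf.2.1
  refine ⟨(hf.1.comp measurable_neg).neg, ⟨C, fun x => by simpa using hC (-x)⟩, fun x => ?_⟩
  dsimp only
  rw [intervalIntegral.integral_neg, intervalIntegral.integral_comp_neg, neg_zero,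
    hf.integral_eq_sub]
  ring

theorem memLp_two {μ : Measure ℝ} [IsFiniteMeasure μ] (hf : IsAbsContWithBddDeriv f f')
    (hμ : MemLp id 2 μ) : MemLp f 2 μ := by
  obtain ⟨K, hK⟩ := hf.exists_lipschitzWith
  have h := (hK.sub (LipschitzWith.const (f 0))).comp_memLp (by simp) hμ
  convert h.add (memLp_const (f 0)) using 1
  ext x
  simp

theorem integrable_deriv_comp {β : Type*} [MeasurableSpace β] {ν : Measure β} [IsFiniteMeasure ν]
    (hf : IsAbsContWithBddDeriv f f') {φ : β → ℝ} (hφ : Measurable φ) :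
    Integrable (fun b => f' (φ b)) ν := by
  obtain ⟨hf'm, ⟨C, hC⟩, -⟩ := hf
  exact .of_bound (hf'm.comp hφ).aestronglyMeasurable C (.of_forall fun b => hC (φ b))

theorem integrable_id_mul {μ : Measure ℝ} [IsFiniteMeasure μ] (hf : IsAbsContWithBddDeriv f f')
    (hμ : MemLp id 2 μ) : Integrable (fun x => x * f x) μ :=
  hμ.integrable_mul (hf.memLp_two hμ)

theorem sq_mul_integral_comp_mul_uniformIoo (hf : IsAbsContWithBddDeriv f f') (x : ℝ) :
    x ^ 2 * ∫ v, f' (v * x) ∂uniformIoo (-1) 1 = x * (f x - f (-x)) / 2 := by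
  rcases eq_or_ne x 0 with rfl | hx
  · simp
  rw [integral_uniformIoo (by norm_num), intervalIntegral.integral_comp_mul_right f' hx,
    neg_one_mul, one_mul, hf.integral_eq_sub, smul_eq_mul, smul_eq_mul]
  field_simp
  ring

end IsAbsContWithBddDeriv

theorem ProbabilityTheory.IndepFun.integral_comp_eq_integral_integral
    {Ω β γ E : Type*} [NormedAddCommGroup E] [NormedSpace ℝ E]
    [MeasurableSpace Ω] [MeasurableSpace β] [MeasurableSpace γ]
    {P : Measure Ω} [IsFiniteMeasure P] {X : Ω → β} {Y : Ω → γ} (hXY : IndepFun X Y P)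
    (hX : AEMeasurable X P) (hY : AEMeasurable Y P) {g : β → γ → E}
    (hg : Integrable (Function.uncurry g) ((P.map X).prod (P.map Y))) :
    ∫ ω, g (X ω) (Y ω) ∂P = ∫ y, ∫ x, g x y ∂P.map X ∂P.map Y := by
  have hprod := hXY.map_prod_eq_prod_map_map hX hY
  rw [← hprod] at hg
  refine (integral_map (hX.prodMk hY) hg.1).symm.trans ?_
  rw [hprod] at hg ⊢
  exact integral_prod_symm _ hg

/-- If `W` has `0 < E W² < ∞`, `W⁽²⁾` has the 2-power bias distribution of `W`, and `V` is
uniform on `(-1,1)` independent of `W⁽²⁾`, then for every absolutely continuous `f` with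
bounded derivative, `2 E W² · E f'(V·W⁽²⁾) = E[W f(W)] - E[W f(-W)]`. -/
theorem two_power_bias_stein_identity
    {Ω Ω' : Type*} [MeasureSpace Ω] [IsProbabilityMeasure (ℙ : Measure Ω)]
    [MeasureSpace Ω'] [IsProbabilityMeasure (ℙ : Measure Ω')]
    (W : Ω → ℝ) (V W2 : Ω' → ℝ)
    (hW : Measurable W) (hV : Measurable V) (hW2 : Measurable W2)
    (hint : Integrable (fun ω => W ω ^ 2) ℙ) (hpos : 0 < ∫ ω, W ω ^ 2 ∂ℙ)
    (hbias : Measure.map W2 ℙ = powerBias 2 (Measure.map W ℙ))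
    (hVlaw : Measure.map V ℙ = uniformIoo (-1) 1)
    (hindep : IndepFun V W2 ℙ)
    (f f' : ℝ → ℝ) (hf : IsAbsContWithBddDeriv f f') :
    2 * (∫ ω, W ω ^ 2 ∂ℙ) * ∫ ω, f' (V ω * W2 ω) ∂ℙ
      = (∫ ω, W ω * f (W ω) ∂ℙ) - ∫ ω, W ω * f (-W ω) ∂ℙ := by
  set μ := Measure.map W ℙ
  set m := ∫ ω, W ω ^ 2 ∂ℙ
  have hμ : MemLp id 2 μ := (memLp_two_iff_integrable_sq aestronglyMeasurable_id).2
    ((integrable_map_measure (by fun_prop) hW.aemeasurable).2 hint)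
  have hmoment : ∫ x, |x| ^ (2 : ℝ) ∂μ = m := by
    rw [integral_map hW.aemeasurable (by fun_prop (disch := norm_num))]
    simp only [Real.rpow_two, sq_abs, m]
  have hlhs : ∫ ω, f' (V ω * W2 ω) ∂ℙ = m⁻¹ * ∫ x, x * (f x - f (-x)) / 2 ∂μ := by
    rw [hindep.integral_comp_eq_integral_integral (g := fun v x => f' (v * x))
        hV.aemeasurable hW2.aemeasurable (hf.integrable_deriv_comp (by fun_prop)), hVlaw, hbias,
      integral_powerBias, hmoment, smul_eq_mul]
    simp only [Real.rpow_two, sq_abs, smul_eq_mul, hf.sq_mul_integral_comp_mul_uniformIoo]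
  have hrhs : (∫ ω, W ω * f (W ω) ∂ℙ) - ∫ ω, W ω * f (-W ω) ∂ℙ
      = ∫ x, x * (f x - f (-x)) ∂μ := by
    have hfc := hf.continuous
    simp_rw [mul_sub]
    rw [integral_sub (hf.integrable_id_mul hμ) (hf.comp_neg.integrable_id_mul hμ),
      integral_map hW.aemeasurable (by fun_prop), integral_map hW.aemeasurable (by fun_prop)]
  rw [hlhs, hrhs, integral_div]
  field_simp
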